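/- Let x = lim_{n→∞} στσ²τ⋯σⁿτ(aaa⋯) ∈ A^ℕ. Then x is a primitive S-adic sequence over S = {σ,τ}, but x is not linearly recurrent. -/

import Mathlib

/-!
The directive sequence of `ρ` is `σ τ σ² τ σ³ τ ⋯`, and every product of two of `σ`, `τ` maps
each letter to a word containing all letters: this is primitivity with `s₀ = 2`.

Both `σ` and `τ` are uniform of length `3` and recognizable, hence so is `ρₘ`, of length `ℓₘ`.
In an image `σᵏ τ (V)` the factor `ca` occurs only at positions `≡ -1 (mod 3ᵏ⁺¹)`: `τ` creates
it only across the boundary of two images, and `σ` only transports it, from `σ(c) σ(a)`.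
By recognizability of `ρₘ`, the occurrences of `u = ρₘ(ca)` in `x` are therefore all congruent
modulo `ℓₘ₊₁ = 3ᵐ⁺² ℓₘ`, so return words to `u` have length at least `3ᵐ⁺² |u| / 2`.
-/

namespace DurandLR

variable {A B : Type*}

/-- `u` occurs at position `i` in the one-sided sequence `x`. -/
def OccursAt (x : ℕ → A) (u : List A) (i : ℕ) : Prop :=
  ∀ k : Fin u.length, x (i + (k : ℕ)) = u.get k

/-- `u` occurs (somewhere) in the one-sided sequence `x`. -/
def Occurs (x : ℕ → A) (u : List A) : Prop := ∃ i, OccursAt x u i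

/-- `u` occurs at position `i` in the two-sided sequence `x`. -/
def OccursAtZ (x : ℤ → A) (u : List A) (i : ℤ) : Prop :=
  ∀ k : Fin u.length, x (i + (k : ℕ)) = u.get k

def OccursZ (x : ℤ → A) (u : List A) : Prop := ∃ i, OccursAtZ x u i

/-- The word `u` has exactly `m` occurrences in the finite word `w`. -/
def OccCountEq (u w : List A) (m : ℕ) : Prop :=
  {i : ℕ | u <+: w.drop i}.ncard = m

/-- `w` is a return word to `u` in the one-sided sequence `x`: `wu` occurs in `x`,
`u` is a prefix of `wu` and `u` has exactly two occurrences in `wu`. -/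
def IsReturnWord (x : ℕ → A) (u w : List A) : Prop :=
  Occurs x (w ++ u) ∧ u <+: (w ++ u) ∧ OccCountEq u (w ++ u) 2

/-- `w` is a return word to `u` in the two-sided sequence `x`. -/
def IsReturnWordZ (x : ℤ → A) (u w : List A) : Prop :=
  OccursZ x (w ++ u) ∧ u <+: (w ++ u) ∧ OccCountEq u (w ++ u) 2

/-- `x` is uniformly recurrent: every word occurring in `x` occurs with bounded gaps. -/
def UniformlyRecurrent (x : ℕ → A) : Prop :=
  ∀ u, Occurs x u → ∃ M : ℕ, ∀ i : ℕ, ∃ j, i ≤ j ∧ j < i + M ∧ OccursAt x u j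

def UniformlyRecurrentZ (x : ℤ → A) : Prop :=
  ∀ u, OccursZ x u → ∃ M : ℕ, ∀ i : ℤ, ∃ j : ℤ, i ≤ j ∧ j < i + M ∧ OccursAtZ x u j

/-- `x` is linearly recurrent with constant `K`. -/
def LinearlyRecurrentWith (x : ℕ → A) (K : ℕ) : Prop :=
  UniformlyRecurrent x ∧ ∀ u w, IsReturnWord x u w → w.length ≤ K * u.length

def LinearlyRecurrent (x : ℕ → A) : Prop := ∃ K, LinearlyRecurrentWith x K

def LinearlyRecurrentZ (x : ℤ → A) : Prop :=
  UniformlyRecurrentZ x ∧ ∃ K : ℕ, ∀ u w, IsReturnWordZ x u w → w.length ≤ K * u.length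

/-- The subshift generated by a two-sided sequence `x` : all `z` whose finite subwords
occur in `x`. -/
def SubshiftGenZ (x : ℤ → A) : Set (ℤ → A) := {z | ∀ u, OccursZ z u → OccursZ x u}

/-- The subshift generated by a one-sided sequence `x`. -/
def SubshiftGen (x : ℕ → A) : Set (ℤ → A) := {z | ∀ u, OccursZ z u → Occurs x u}

/-- A minimal subshift: nonempty and every element generates it. -/
def IsMinimalSubshift (X : Set (ℤ → A)) : Prop :=
  X.Nonempty ∧ ∀ z ∈ X, X = SubshiftGenZ z

/-- A linearly recurrent subshift: minimal and containing an LR sequence. -/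
def IsLRSubshift (X : Set (ℤ → A)) : Prop :=
  IsMinimalSubshift X ∧ ∃ x ∈ X, LinearlyRecurrentZ x

def IsPeriodic (z : ℤ → A) : Prop := ∃ p : ℕ, 0 < p ∧ ∀ n : ℤ, z (n + p) = z n

/-- Image of a finite word under a morphism (substitution). -/
def wordMap (σ : A → List B) : List A → List B
  | [] => []
  | a :: u => σ a ++ wordMap σ u

/-- Composition of two morphisms: `compM σ τ = σ ∘ τ`. -/
def compM (σ τ : A → List A) : A → List A := fun b => wordMap σ (τ b)

/-- Iterate of a morphism: `powM σ n = σ^n`. -/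
def powM (σ : A → List A) : ℕ → A → List A
  | 0 => fun b => [b]
  | n + 1 => compM σ (powM σ n)

/-- `chain σ r n = σ_r ∘ σ_{r+1} ∘ ⋯ ∘ σ_{r+n-1}` (the empty composition for `n = 0`). -/
def chain (σ : ℕ → A → List A) (r : ℕ) : ℕ → A → List A
  | 0 => fun b => [b]
  | n + 1 => fun b => wordMap (chain σ r n) (σ (r + n) b)

/-- The periodic infinite sequence `www⋯` obtained by repeating the word `w`
(with a default letter for the degenerate empty case). -/
def repSeq (w : List A) (d : A) : ℕ → A := fun i => w.getD (i % w.length) d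

/-- The prefix of length `n` of the sequence `x`, as a word. -/
def seqTake (x : ℕ → A) (n : ℕ) : List A := (List.range n).map x

/-- `y` is the image of the infinite sequence `z` under the morphism `σ`:
the image of every prefix of `z` is a prefix of `y`. -/
def IsSeqImage (σ : A → List B) (z : ℕ → A) (y : ℕ → B) : Prop :=
  ∀ n, seqTake y (wordMap σ (seqTake z n)).length = wordMap σ (seqTake z n)

/-- `σ_0 σ_1 ⋯ σ_n (aaa⋯)` converges to `x` in the product topology, where the `n`-th
approximation is the periodic sequence obtained by repeating the word `W n`. -/
def ConvergesTo (W : ℕ → List A) (d : A) (x : ℕ → A) : Prop :=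
  ∀ m, ∃ N, ∀ n ≥ N, repSeq (W n) d m = x m

/-- A proper morphism: all images begin with the same letter and end with the same letter. -/
def ProperMorphism (σ : A → List A) : Prop :=
  ∃ l r : A, ∀ b, (σ b).head? = some l ∧ (σ b).getLast? = some r

/-- Primitivity with constant `s₀` of a directive sequence of morphisms
`σ_n : A_{n+1} → A_n^*`: every `b ∈ A_r` occurs in `σ_{r+1} ⋯ σ_{r+s₀} (c)`
for every `c ∈ A_{r+s₀+1}`. -/
def PrimitiveWith (σ : ℕ → A → List A) (Aseq : ℕ → Set A) (s0 : ℕ) : Prop :=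
  ∀ r : ℕ, ∀ b ∈ Aseq r, ∀ c ∈ Aseq (r + s0 + 1), b ∈ chain σ (r + 1) s0 c

/-- The data of an S-adic system: `a` belongs to every alphabet and
`σ_n` maps `A_{n+1}` into words over `A_n`. -/
def SAdicSystem (σ : ℕ → A → List A) (Aseq : ℕ → Set A) (a : A) : Prop :=
  (∀ n, a ∈ Aseq n) ∧ (∀ n, ∀ b ∈ Aseq (n + 1), ∀ c ∈ σ n b, c ∈ Aseq n)

/-- `x` is the S-adic sequence generated by the directive sequence `σ` and letter `a`:
`σ_0 σ_1 ⋯ σ_n (aaa⋯)` converges to `x`. -/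
def GeneratesSAdic (σ : ℕ → A → List A) (Aseq : ℕ → Set A) (a : A) (x : ℕ → A) : Prop :=
  SAdicSystem σ Aseq a ∧ ConvergesTo (fun n => chain σ 0 (n + 1) a) a x

/-- The complexity function `p_x(n)`: the number of distinct words of length `n`
occurring in `x`. -/
noncomputable def complexity (x : ℕ → A) (n : ℕ) : ℕ := {u : List A | u.length = n ∧ Occurs x u}.ncard

/-- Any two successive occurrences of `u` in `x` differ by at most `M`. -/
def GapsBoundedBy (x : ℕ → A) (u : List A) (M : ℕ) : Prop :=
  ∀ i j, OccursAt x u i → OccursAt x u j → i < j →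
    (∀ k, i < k → k < j → ¬ OccursAt x u k) → j - i ≤ M

/-- The finite word `x_{[p,q)}` of a two-sided sequence. -/
def zSeg (x : ℤ → A) (p q : ℤ) : List A := (List.range (q - p).toNat).map fun t => x (p + t)

/-- `w` is a return word to `u.v` in the two-sided sequence `x`: there are two
consecutive occurrences `j < k` of `uv` in `x` with `w = x_{[j+|u|, k+|u|)}`. -/
def IsReturnWordUV (x : ℤ → A) (u v w : List A) : Prop :=
  ∃ j k : ℤ, OccursAtZ x (u ++ v) j ∧ OccursAtZ x (u ++ v) k ∧ j < k ∧
    (∀ i : ℤ, j < i → i < k → ¬ OccursAtZ x (u ++ v) i) ∧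
    w = zSeg x (j + u.length) (k + u.length)

/-- The substitution `σ` on `{a,b,c} = {0,1,2}`: `σ(a)=acb`, `σ(b)=bab`, `σ(c)=cbc`. -/
def sigma3 : Fin 3 → List (Fin 3) := ![[0, 2, 1], [1, 0, 1], [2, 1, 2]]

/-- The substitution `τ` on `{a,b,c} = {0,1,2}`: `τ(a)=abc`, `τ(b)=acb`, `τ(c)=aac`. -/
def tau3 : Fin 3 → List (Fin 3) := ![[0, 1, 2], [0, 2, 1], [0, 0, 2]]

/-- `rho n = σ τ σ² τ ⋯ σⁿ τ` (identity for `n = 0`). -/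
def rho : ℕ → Fin 3 → List (Fin 3)
  | 0 => fun b => [b]
  | n + 1 => compM (rho n) (compM (powM sigma3 (n + 1)) tau3)

/-- `psi n l = σ^{n+2} τ σ^{n+3} τ ⋯ σ^{n+l+1} τ` (identity for `l = 0`). -/
def psi (n : ℕ) : ℕ → Fin 3 → List (Fin 3)
  | 0 => fun b => [b]
  | l + 1 => compM (psi n l) (compM (powM sigma3 (n + 2 + l)) tau3)

/-- The Sturmian substitution `τ` on `{0,1}`: `τ(0)=0`, `τ(1)=10`. -/
def tau2 : Fin 2 → List (Fin 2) := ![[0], [1, 0]]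

/-- The Sturmian substitution `σ` on `{0,1}`: `σ(0)=01`, `σ(1)=1`. -/
def sigma2 : Fin 2 → List (Fin 2) := ![[0, 1], [1]]

/-- `xi i k = τ^{i₁} σ^{i₂} τ^{i₃} ⋯ τ^{i_{2k-1}} σ^{i_{2k}}` (identity for `k = 0`). -/
def xi (i : ℕ → ℕ) : ℕ → Fin 2 → List (Fin 2)
  | 0 => fun b => [b]
  | k + 1 => compM (xi i k) (compM (powM tau2 (i (2 * k + 1))) (powM sigma2 (i (2 * k + 2))))

/-- `a : ℕ → ℕ` gives (from index 1 on) the continued fraction expansion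
`α = [0; a₁, a₂, a₃, …]`, expressed through the Gauss map. -/
def IsCFExpansion (α : ℝ) (a : ℕ → ℕ) : Prop :=
  ∃ β : ℕ → ℝ, β 0 = α ∧ ∀ n : ℕ,
    0 < β n ∧ β n < 1 ∧ (a (n + 1) : ℤ) = ⌊1 / β n⌋ ∧ β (n + 1) = 1 / β n - ⌊1 / β n⌋

variable {C : Type*}

section Morphisms

theorem wordMap_eq_flatMap (σ : A → List B) (u : List A) : wordMap σ u = u.flatMap σ := by
  induction u with
  | nil => rfl
  | cons a u ih => simp [wordMap, ih]

theorem wordMap_append (σ : A → List B) (u v : List A) :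
    wordMap σ (u ++ v) = wordMap σ u ++ wordMap σ v := by
  simp [wordMap_eq_flatMap]

theorem wordMap_wordMap (φ : B → List C) (ψ : A → List B) (u : List A) :
    wordMap φ (wordMap ψ u) = wordMap (fun a => wordMap φ (ψ a)) u := by
  simp [wordMap_eq_flatMap, List.flatMap_assoc]

theorem wordMap_compM (φ ψ : A → List A) (u : List A) :
    wordMap (compM φ ψ) u = wordMap φ (wordMap ψ u) :=
  (wordMap_wordMap φ ψ u).symm

theorem wordMap_singleton (u : List A) : wordMap (fun a => [a]) u = u := by
  simp [wordMap_eq_flatMap]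

theorem _root_.List.IsPrefix.wordMap (σ : A → List B) {u v : List A} (h : u <+: v) :
    wordMap σ u <+: wordMap σ v := by
  obtain ⟨t, rfl⟩ := h
  exact ⟨_, (wordMap_append σ u t).symm⟩

theorem compM_assoc (φ ψ χ : A → List A) : compM (compM φ ψ) χ = compM φ (compM ψ χ) := by
  funext a
  exact (wordMap_wordMap φ ψ (χ a)).symm

theorem compM_singleton_left (φ : A → List A) : compM (fun a => [a]) φ = φ := by
  funext a
  exact wordMap_singleton (φ a)

theorem compM_singleton_right (φ : A → List A) : compM φ (fun a => [a]) = φ := by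
  funext a
  simp [compM, wordMap]

theorem powM_succ' (φ : A → List A) (n : ℕ) : powM φ (n + 1) = compM (powM φ n) φ := by
  induction n with
  | zero => exact (compM_singleton_right φ).trans (compM_singleton_left φ).symm
  | succ n ih =>
    show compM φ (powM φ (n + 1)) = _
    nth_rewrite 1 [ih]
    rw [← compM_assoc]
    rfl

theorem chain_succ (σs : ℕ → A → List A) (r n : ℕ) :
    chain σs r (n + 1) = compM (chain σs r n) (σs (r + n)) := rfl

theorem chain_one (σs : ℕ → A → List A) (r : ℕ) : chain σs r 1 = σs r :=
  compM_singleton_left (σs r)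

theorem chain_add (σs : ℕ → A → List A) (r m n : ℕ) :
    chain σs r (m + n) = compM (chain σs r m) (chain σs (r + m) n) := by
  induction n with
  | zero => exact (compM_singleton_right _).symm
  | succ n ih => rw [← add_assoc, chain_succ, ih, compM_assoc, chain_succ, add_assoc]

theorem chain_eq_powM {σs : ℕ → A → List A} {φ : A → List A} {r n : ℕ}
    (h : ∀ t < n, σs (r + t) = φ) : chain σs r n = powM φ n := by
  induction n with
  | zero => rfl
  | succ n ih =>
    rw [chain_succ, ih fun t ht => h t (by omega), h n (by omega), powM_succ']

end Morphisms

section Uniform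

def IsUniform (φ : A → List B) (L : ℕ) : Prop := ∀ a, (φ a).length = L

variable {φ : A → List B} {L : ℕ}

theorem IsUniform.length_wordMap (hφ : IsUniform φ L) (u : List A) :
    (wordMap φ u).length = L * u.length := by
  induction u with
  | nil => rfl
  | cons a u ih => simp [wordMap, hφ a, ih, Nat.mul_succ, Nat.add_comm]

theorem IsUniform.comp {ψ : C → List A} {M : ℕ} (hφ : IsUniform φ L) (hψ : IsUniform ψ M) :
    IsUniform (fun c => wordMap φ (ψ c)) (L * M) := fun c => by
  rw [hφ.length_wordMap, hψ c]

theorem IsUniform.wordMap_drop (hφ : IsUniform φ L) (u : List A) (q : ℕ) :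
    wordMap φ (u.drop q) = (wordMap φ u).drop (L * q) := by
  induction u generalizing q with
  | nil => simp [wordMap]
  | cons a u ih =>
    cases q with
    | zero => simp
    | succ q =>
      rw [List.drop_succ_cons, ih, wordMap, List.drop_append, hφ a, mul_add, mul_one,
        List.drop_eq_nil_of_le (as := φ a) (by rw [hφ a]; omega)]
      simp

theorem IsUniform.prefix_drop_wordMap (hφ : IsUniform φ L) {V W : List A} {q : ℕ}
    (h : V <+: W.drop q) : wordMap φ V <+: (wordMap φ W).drop (L * q) :=
  hφ.wordMap_drop W q ▸ h.wordMap φ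

-- `k = ⌈(r + |v|) / L⌉` is the number of images of letters that the factor `v` meets.
theorem IsUniform.exists_window (hφ : IsUniform φ L) {W : List A} {v : List B} {q r k : ℕ}
    (hv0 : v ≠ []) (hv : v <+: (wordMap φ W).drop (L * q + r))
    (hk : r + v.length ≤ L * k) (hk' : L * k < r + v.length + L) :
    ∃ V, V.length = k ∧ V <+: W.drop q ∧ v <+: (wordMap φ V).drop r := by
  have hfit : q + k ≤ W.length := by
    have hlen := hv.length_le
    rw [List.length_drop, hφ.length_wordMap] at hlen
    have hpos := List.length_pos_iff.2 hv0
    have : L * (q + k) < L * (W.length + 1) := by rw [mul_add, mul_add]; omega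
    exact Nat.lt_succ_iff.1 (Nat.lt_of_mul_lt_mul_left this)
  have hVlen : ((W.drop q).take k).length = k := by
    rw [List.length_take, List.length_drop]; omega
  refine ⟨(W.drop q).take k, hVlen, List.take_prefix _ _, ?_⟩
  rw [← List.drop_drop, ← hφ.wordMap_drop, ← List.take_append_drop k (W.drop q),
    wordMap_append, List.drop_append] at hv
  refine List.prefix_of_prefix_length_le hv (List.prefix_append _ _) ?_
  rw [List.length_drop, hφ.length_wordMap, hVlen]
  omega

theorem prefix_of_wordMap_prefix (hφ : IsUniform φ L) (hL : 0 < L) (hinj : Function.Injective φ)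
    {Z V : List A} (h : wordMap φ Z <+: wordMap φ V) : Z <+: V := by
  induction Z generalizing V with
  | nil => exact List.nil_prefix
  | cons z Z ih =>
    cases V with
    | nil =>
      have := h.length_le
      rw [hφ.length_wordMap, hφ.length_wordMap, List.length_cons, List.length_nil, mul_zero] at this
      exact absurd this (Nat.mul_pos hL Z.length.succ_pos).not_ge
    | cons v V =>
      obtain ⟨t, ht⟩ := h
      simp only [wordMap, List.append_assoc] at ht
      obtain ⟨hzv, hrest⟩ := List.append_inj ht (by rw [hφ z, hφ v])
      rw [hinj hzv]
      exact List.cons_prefix_cons.2 ⟨rfl, ih ⟨t, hrest⟩⟩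

end Uniform

section Recognizable

def IsRecognizable (φ : A → List B) (L : ℕ) : Prop :=
  IsUniform φ L ∧ ∀ (W Z : List A) (p : ℕ), 2 ≤ Z.length →
    wordMap φ Z <+: (wordMap φ W).drop p → ∃ j, p = L * j ∧ Z <+: W.drop j

theorem isRecognizable_singleton : IsRecognizable (fun a : A => [a]) 1 :=
  ⟨fun _ => rfl, fun W Z p _ h => ⟨p, (one_mul p).symm, by rwa [wordMap_singleton,
    wordMap_singleton] at h⟩⟩

theorem IsRecognizable.comp {φ : B → List C} {ψ : A → List B} {L M : ℕ}
    (hφ : IsRecognizable φ L) (hψ : IsRecognizable ψ M) (hM : 0 < M) :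
    IsRecognizable (fun a => wordMap φ (ψ a)) (L * M) := by
  refine ⟨hφ.1.comp hψ.1, fun W Z p hZ h => ?_⟩
  rw [← wordMap_wordMap, ← wordMap_wordMap] at h
  obtain ⟨i, rfl, hi⟩ := hφ.2 _ _ p (by rw [hψ.1.length_wordMap]; nlinarith) h
  obtain ⟨j, rfl, hj⟩ := hψ.2 _ _ i hZ hi
  exact ⟨j, (mul_assoc L M j).symm, hj⟩

theorem isRecognizable_chain {σs : ℕ → A → List A} {L : ℕ} (h : ∀ i, IsRecognizable (σs i) L)
    (hL : 0 < L) (r n : ℕ) : IsRecognizable (chain σs r n) (L ^ n) := by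
  induction n with
  | zero => exact isRecognizable_singleton
  | succ n ih => exact pow_succ L n ▸ ih.comp (h (r + n)) hL

theorem isRecognizable_of_injective {φ : A → List B} {L : ℕ} (hφ : IsUniform φ L) (hL : 0 < L)
    (hinj : Function.Injective φ)
    (hsync : ∀ r < L, 0 < r → ∀ a b c d e : A,
      ¬ wordMap φ [d, e] <+: (wordMap φ [a, b, c]).drop r) :
    IsRecognizable φ L := by
  refine ⟨hφ, fun W Z p hZ h => ?_⟩
  obtain ⟨d, e, Z, rfl⟩ : ∃ d e Z', Z = d :: e :: Z' := by
    match Z, hZ with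
    | d :: e :: Z', _ => exact ⟨d, e, Z', rfl⟩
  obtain ⟨q, r, hr, rfl⟩ : ∃ q r, r < L ∧ p = L * q + r :=
    ⟨p / L, p % L, Nat.mod_lt p hL, (Nat.div_add_mod p L).symm⟩
  rcases Nat.eq_zero_or_pos r with rfl | hr0
  · rw [Nat.add_zero, ← hφ.wordMap_drop] at h
    exact ⟨q, rfl, prefix_of_wordMap_prefix hφ hL hinj h⟩
  · have hde : wordMap φ [d, e] <+: (wordMap φ W).drop (L * q + r) :=
      (List.IsPrefix.wordMap φ ⟨Z, rfl⟩).trans h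
    have hlen : (wordMap φ [d, e]).length = 2 * L := by
      rw [hφ.length_wordMap]; simp [mul_comm]
    obtain ⟨V, hV, -, hVde⟩ := hφ.exists_window (k := 3)
      (List.ne_nil_of_length_pos (by rw [hlen]; omega)) hde
      (by omega) (by omega)
    obtain ⟨a, b, c, rfl⟩ := List.length_eq_three.1 hV
    exact absurd hVde (hsync r hr hr0 a b c d e)

end Recognizable

section Occurrences

variable {x : ℕ → A} {u v : List A} {P Q i : ℕ}

theorem OccursAt.add_of_prefix_drop (hv : OccursAt x v P) (h : u <+: v.drop i) :
    OccursAt x u (P + i) := by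
  intro k
  have hk : i + k < v.length := by
    have := h.length_le
    rw [List.length_drop] at this
    omega
  rw [add_assoc, hv ⟨i + k, hk⟩]
  simp [h.getElem k.isLt]

theorem OccursAt.prefix_drop (hv : OccursAt x v P) (hu : OccursAt x u (P + i))
    (hi : i + u.length ≤ v.length) : u <+: v.drop i := by
  refine List.prefix_iff_getElem.2 ⟨by rw [List.length_drop]; omega, fun k hk => ?_⟩
  have h1 := hu ⟨k, hk⟩
  have h2 := hv ⟨i + k, by omega⟩
  simp only [List.get_eq_getElem, ← add_assoc] at h1 h2
  simp [← h1, h2]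

theorem OccursAt.of_convergesTo {W : ℕ → List A} {d : A} (hW : ∀ n n', n ≤ n' → W n <+: W n')
    (hx : ConvergesTo W d x) (n : ℕ) : OccursAt x (W n) 0 := by
  intro k
  obtain ⟨N, hN⟩ := hx k
  have hpre := hW n (max N n) (le_max_right N n)
  have hk : (k : ℕ) < (W (max N n)).length := k.isLt.trans_le hpre.length_le
  rw [Nat.zero_add, ← hN (max N n) (le_max_left N n), repSeq, Nat.mod_eq_of_lt hk,
    List.getD_eq_getElem _ _ hk, List.get_eq_getElem, hpre.getElem k.isLt]

theorem convergesTo_of_occursAt {W : ℕ → List A} {d : A} (hW : ∀ n, OccursAt x (W n) 0)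
    (hlen : ∀ m, ∃ N, ∀ n ≥ N, m < (W n).length) : ConvergesTo W d x := by
  intro m
  obtain ⟨N, hN⟩ := hlen m
  refine ⟨N, fun n hn => ?_⟩
  have hm := hN n hn
  rw [repSeq, Nat.mod_eq_of_lt hm, List.getD_eq_getElem _ _ hm]
  simpa using (hW n ⟨m, hm⟩).symm

theorem exists_next_occursAt (hx : UniformlyRecurrent x) (h : OccursAt x u P) :
    ∃ Q, P < Q ∧ OccursAt x u Q ∧ ∀ k, P < k → k < Q → ¬ OccursAt x u k := by
  classical
  have hex : ∃ Q, P < Q ∧ OccursAt x u Q := by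
    obtain ⟨M, hM⟩ := hx u ⟨P, h⟩
    obtain ⟨j, hj, -, hocc⟩ := hM (P + 1)
    exact ⟨j, hj, hocc⟩
  exact ⟨Nat.find hex, (Nat.find_spec hex).1, (Nat.find_spec hex).2,
    fun k hPk hk hocc => Nat.find_min hex hk ⟨hPk, hocc⟩⟩

theorem OccursAt.seqTake_append (hQ : OccursAt x u Q) (hPQ : P ≤ Q) :
    OccursAt x (seqTake (fun k => x (P + k)) (Q - P) ++ u) P := by
  intro ⟨k, hk⟩
  have hw : (seqTake (fun k => x (P + k)) (Q - P)).length = Q - P := by simp [seqTake]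
  rw [List.length_append, hw] at hk
  simp only [List.get_eq_getElem]
  rcases lt_or_ge k (Q - P) with hkw | hkw
  · rw [List.getElem_append_left (by omega)]
    simp [seqTake]
  · have := hQ ⟨k - (Q - P), by omega⟩
    simp only [List.get_eq_getElem] at this
    rw [List.getElem_append_right (by omega)]
    simp only [hw, ← this]
    congr 1
    omega

theorem isReturnWord_of_consecutive (hu : u ≠ []) (hP : OccursAt x u P) (hQ : OccursAt x u Q)
    (hPQ : P < Q) (hmin : ∀ k, P < k → k < Q → ¬ OccursAt x u k) :
    IsReturnWord x u (seqTake (fun k => x (P + k)) (Q - P)) := by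
  set w := seqTake (fun k => x (P + k)) (Q - P)
  have hw : w.length = Q - P := by simp [w, seqTake]
  have hwu : OccursAt x (w ++ u) P := hQ.seqTake_append hPQ.le
  have hpre : u <+: w ++ u := by
    simpa using hwu.prefix_drop (i := 0) (by simpa using hP) (by simp)
  refine ⟨⟨P, hwu⟩, hpre, ?_⟩
  have hset : {k : ℕ | u <+: (w ++ u).drop k} = {0, w.length} := by
    ext k
    simp only [Set.mem_ofPred_eq, Set.mem_insert_iff, Set.mem_singleton_iff]
    constructor
    · intro h
      have hk : k ≤ w.length := by
        have hle := h.length_le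
        have := List.length_pos_iff.2 hu
        rw [List.length_drop, List.length_append] at hle
        omega
      by_contra! hne
      exact hmin (P + k) (by omega) (by omega) (hwu.add_of_prefix_drop h)
    · rintro (rfl | rfl)
      · simpa using hpre
      · simp
  rw [OccCountEq, hset, Set.ncard_pair (by omega)]

theorem not_linearlyRecurrentWith_of_separated {K G : ℕ} (hu : u ≠ []) (hocc : Occurs x u)
    (hsep : ∀ P Q, OccursAt x u P → OccursAt x u Q → P < Q → P + G ≤ Q)
    (hG : K * u.length < G) : ¬ LinearlyRecurrentWith x K := by
  rintro ⟨hUR, hK⟩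
  obtain ⟨P, hP⟩ := hocc
  obtain ⟨Q, hPQ, hQ, hmin⟩ := exists_next_occursAt hUR hP
  have hret := hK u _ (isReturnWord_of_consecutive hu hP hQ hPQ hmin)
  have := hsep P Q hP hQ hPQ
  simp only [seqTake, List.length_map, List.length_range] at hret
  omega

end Occurrences

section Markers

theorem isUniform_sigma3 : IsUniform sigma3 3 := by
  unfold IsUniform; decide

theorem isUniform_tau3 : IsUniform tau3 3 := by
  unfold IsUniform; decide

theorem isRecognizable_sigma3 : IsRecognizable sigma3 3 :=
  isRecognizable_of_injective isUniform_sigma3 (by norm_num) (by decide) (by decide)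

theorem isRecognizable_tau3 : IsRecognizable tau3 3 :=
  isRecognizable_of_injective isUniform_tau3 (by norm_num) (by decide) (by decide)

theorem exists_eq_three_mul_add (p : ℕ) : ∃ q r, r < 3 ∧ p = 3 * q + r :=
  ⟨p / 3, p % 3, Nat.mod_lt p (by norm_num), (Nat.div_add_mod p 3).symm⟩

theorem ca_prefix_drop_wordMap_sigma3_iff {W : List (Fin 3)} {p : ℕ} :
    [2, 0] <+: (wordMap sigma3 W).drop p ↔ ∃ j, p = 3 * j + 2 ∧ [2, 0] <+: W.drop j := by
  constructor
  · intro h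
    obtain ⟨q, r, hr, rfl⟩ := exists_eq_three_mul_add p
    rcases (by omega : r < 2 ∨ r = 2) with hr | rfl
    · obtain ⟨V, hV, -, hca⟩ :=
        isUniform_sigma3.exists_window (k := 1) (by simp) h
          (by simp only [List.length_cons, List.length_nil]; omega) (by simp)
      obtain ⟨a, rfl⟩ := List.length_eq_one_iff.1 hV
      exact absurd hca ((by decide : ∀ r < 2, ∀ a : Fin 3,
        ¬ [2, 0] <+: (wordMap sigma3 [a]).drop r) r hr a)
    · obtain ⟨V, hV, hVW, hca⟩ :=
        isUniform_sigma3.exists_window (k := 2) (by simp) h (by simp) (by simp)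
      obtain ⟨a, b, rfl⟩ := List.length_eq_two.1 hV
      obtain ⟨rfl, rfl⟩ := (by decide : ∀ a b : Fin 3,
        [2, 0] <+: (wordMap sigma3 [a, b]).drop 2 → a = 2 ∧ b = 0) a b hca
      exact ⟨q, rfl, hVW⟩
  · rintro ⟨j, rfl, h⟩
    have := (isUniform_sigma3.prefix_drop_wordMap h).drop 2
    rw [List.drop_drop] at this
    exact (by decide : [2, 0] <+: (wordMap sigma3 [2, 0]).drop 2).trans this

theorem ca_prefix_drop_wordMap_powM_iff {W : List (Fin 3)} (k : ℕ) {p : ℕ} :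
    [2, 0] <+: (wordMap (powM sigma3 k) W).drop p ↔
      ∃ j, p + 1 = 3 ^ k * (j + 1) ∧ [2, 0] <+: W.drop j := by
  induction k generalizing p with
  | zero => simp [powM, wordMap_singleton]
  | succ k ih =>
    rw [powM, wordMap_compM, ca_prefix_drop_wordMap_sigma3_iff]
    constructor
    · rintro ⟨i, rfl, hi⟩
      obtain ⟨j, hij, hj⟩ := ih.1 hi
      exact ⟨j, by rw [pow_succ]; linarith, hj⟩
    · rintro ⟨j, hpj, hj⟩
      have hpos : 0 < 3 ^ k * (j + 1) := by positivity
      refine ⟨3 ^ k * (j + 1) - 1, ?_, ih.2 ⟨j, by omega, hj⟩⟩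
      rw [pow_succ, mul_comm (3 ^ k) 3, mul_assoc] at hpj
      omega

theorem mod_three_of_ca_prefix_drop_wordMap_tau3 {W : List (Fin 3)} {p : ℕ}
    (h : [2, 0] <+: (wordMap tau3 W).drop p) : p % 3 = 2 := by
  obtain ⟨q, r, hr, rfl⟩ := exists_eq_three_mul_add p
  rcases (by omega : r < 2 ∨ r = 2) with hr | rfl
  · obtain ⟨V, hV, -, hca⟩ :=
      isUniform_tau3.exists_window (k := 1) (by simp) h
        (by simp only [List.length_cons, List.length_nil]; omega) (by simp)
    obtain ⟨a, rfl⟩ := List.length_eq_one_iff.1 hV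
    exact absurd hca ((by decide : ∀ r < 2, ∀ a : Fin 3,
      ¬ [2, 0] <+: (wordMap tau3 [a]).drop r) r hr a)
  · omega

theorem ca_prefix_drop_wordMap_tau3 {W : List (Fin 3)} {b : Fin 3} (h : [0, b] <+: W) :
    [2, 0] <+: (wordMap tau3 W).drop 2 :=
  (by decide : ∀ b : Fin 3, [2, 0] <+: (wordMap tau3 [0, b]).drop 2) b |>.trans
    ((h.wordMap tau3).drop 2)

theorem dvd_of_ca_prefix_drop_block {V : List (Fin 3)} {k p : ℕ}
    (h : [2, 0] <+: (wordMap (compM (powM sigma3 k) tau3) V).drop p) : 3 ^ (k + 1) ∣ p + 1 := by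
  rw [wordMap_compM, ca_prefix_drop_wordMap_powM_iff] at h
  obtain ⟨j, hpj, hj⟩ := h
  have := mod_three_of_ca_prefix_drop_wordMap_tau3 hj
  rw [hpj, pow_succ]
  exact mul_dvd_mul_left _ (by omega)

theorem ca_prefix_drop_block {V : List (Fin 3)} {b : Fin 3} (h : [0, b] <+: V) (k : ℕ) :
    [2, 0] <+: (wordMap (compM (powM sigma3 k) tau3) V).drop (3 ^ (k + 1) - 1) := by
  rw [wordMap_compM, ca_prefix_drop_wordMap_powM_iff]
  have : 0 < 3 ^ (k + 1) := by positivity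
  exact ⟨2, by rw [pow_succ]; omega, ca_prefix_drop_wordMap_tau3 h⟩

end Markers

section Directive

def blockStart : ℕ → ℕ
  | 0 => 0
  | n + 1 => blockStart n + (n + 2)

open Classical in
/-- The directive sequence `σ τ σ σ τ σ σ σ τ ⋯` of `ρ`: its `n`-th block `σⁿ⁺¹ τ` occupies the
indices `[blockStart n, blockStart (n + 1))`. -/
noncomputable def directive (i : ℕ) : Fin 3 → List (Fin 3) :=
  if i + 1 ∈ Set.range blockStart then tau3 else sigma3

theorem blockStart_strictMono : StrictMono blockStart :=
  strictMono_nat_of_lt_succ fun n => by simp only [blockStart]; omega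

theorem directive_eq_sigma3_or_tau3 (i : ℕ) : directive i = sigma3 ∨ directive i = tau3 := by
  unfold directive
  split_ifs <;> simp

theorem directive_blockStart_add {n t : ℕ} (ht : t ≤ n) : directive (blockStart n + t) = sigma3 := by
  rw [directive, if_neg]
  rintro ⟨k, hk⟩
  have h1 : n < k := blockStart_strictMono.lt_iff_lt.1 (by omega)
  have h2 : k < n + 1 := blockStart_strictMono.lt_iff_lt.1 (by simp only [blockStart]; omega)
  omega

theorem directive_blockStart_add_succ (n : ℕ) : directive (blockStart n + (n + 1)) = tau3 := by
  rw [directive, if_pos ⟨n + 1, by simp only [blockStart]; omega⟩]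

theorem chain_directive_block (n : ℕ) :
    chain directive (blockStart n) (n + 2) = compM (powM sigma3 (n + 1)) tau3 := by
  rw [chain_succ, chain_eq_powM fun t ht => directive_blockStart_add (by omega),
    directive_blockStart_add_succ]

theorem chain_directive_blockStart (n : ℕ) : chain directive 0 (blockStart n) = rho n := by
  induction n with
  | zero => rfl
  | succ n ih =>
    rw [blockStart, chain_add, ih, Nat.zero_add, chain_directive_block]
    rfl

theorem isRecognizable_chain_directive (r n : ℕ) :
    IsRecognizable (chain directive r n) (3 ^ n) := by
  refine isRecognizable_chain (fun i => ?_) (by norm_num) r n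
  rcases directive_eq_sigma3_or_tau3 i with h | h <;> rw [h]
  · exact isRecognizable_sigma3
  · exact isRecognizable_tau3

theorem directive_zero (i : ℕ) : ∃ b c, directive i 0 = [0, b, c] := by
  rcases directive_eq_sigma3_or_tau3 i with h | h <;> rw [h]
  · exact ⟨2, 1, rfl⟩
  · exact ⟨1, 2, rfl⟩

theorem chain_directive_prefix {m n : ℕ} (h : m ≤ n) :
    chain directive 0 m 0 <+: chain directive 0 n 0 := by
  induction n, h using Nat.le_induction with
  | base => exact List.prefix_refl _
  | succ n _ ih =>
    obtain ⟨b, c, hbc⟩ := directive_zero n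
    refine ih.trans ⟨wordMap (chain directive 0 n) [b, c], ?_⟩
    rw [chain_succ, compM, Nat.zero_add, hbc]
    rfl

theorem mem_wordMap_of_eq_sigma3_or_tau3 {φ ψ : Fin 3 → List (Fin 3)}
    (hφ : φ = sigma3 ∨ φ = tau3) (hψ : ψ = sigma3 ∨ ψ = tau3) (b c : Fin 3) :
    b ∈ wordMap φ (ψ c) := by
  rcases hφ with rfl | rfl <;> rcases hψ with rfl | rfl <;> revert b c <;> decide

theorem primitiveWith_directive : PrimitiveWith directive (fun _ => Set.univ) 2 := by
  intro r b _ c _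
  rw [chain_succ, chain_one]
  exact mem_wordMap_of_eq_sigma3_or_tau3 (directive_eq_sigma3_or_tau3 _)
    (directive_eq_sigma3_or_tau3 _) b c

end Directive

section Counterexample

variable {x : ℕ → Fin 3}

theorem isRecognizable_rho (m : ℕ) : IsRecognizable (rho m) (3 ^ blockStart m) :=
  chain_directive_blockStart m ▸ isRecognizable_chain_directive 0 (blockStart m)

theorem occursAt_chain_directive (hx : ConvergesTo (fun n => rho n 0) 0 x) (n : ℕ) :
    OccursAt x (chain directive 0 n 0) 0 := by
  have hrho := OccursAt.of_convergesTo (fun m n h => by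
    simpa only [← chain_directive_blockStart] using
      chain_directive_prefix (blockStart_strictMono.monotone h)) hx n
  rw [← chain_directive_blockStart] at hrho
  simpa using hrho.add_of_prefix_drop (i := 0)
    (by simpa using chain_directive_prefix (blockStart_strictMono.id_le n))

theorem convergesTo_chain_directive (hx : ConvergesTo (fun n => rho n 0) 0 x) :
    ConvergesTo (fun n => chain directive 0 (n + 1) 0) 0 x := by
  refine convergesTo_of_occursAt (fun n => occursAt_chain_directive hx (n + 1)) fun m =>
    ⟨m, fun n hn => ?_⟩
  rw [(isRecognizable_chain_directive 0 (n + 1)).1 0]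
  exact (Nat.lt_pow_self (by norm_num)).trans_le' (by omega)

theorem chain_directive_eq_wordMap_rho (m n : ℕ) :
    chain directive 0 (blockStart m + (m + 2 + n)) 0 = wordMap (rho m)
      (wordMap (compM (powM sigma3 (m + 1)) tau3) (chain directive (blockStart m + (m + 2)) n 0)) := by
  rw [chain_add, compM, chain_add, compM, Nat.zero_add, chain_directive_blockStart,
    chain_directive_block]

theorem occurs_wordMap_rho_ca (hx : ConvergesTo (fun n => rho n 0) 0 x) (m : ℕ) :
    Occurs x (wordMap (rho m) [2, 0]) := by
  obtain ⟨b, c, hbc⟩ := directive_zero (blockStart m + (m + 2))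
  have hca := ca_prefix_drop_block (V := [0, b, c]) ⟨[c], rfl⟩ (m + 1)
  rw [← hbc, ← chain_one directive] at hca
  have hpre := (isRecognizable_rho m).1.prefix_drop_wordMap hca
  rw [← chain_directive_eq_wordMap_rho] at hpre
  exact ⟨_, (occursAt_chain_directive hx _).add_of_prefix_drop hpre⟩

theorem dvd_of_occursAt_wordMap_rho_ca (hx : ConvergesTo (fun n => rho n 0) 0 x) {m P : ℕ}
    (h : OccursAt x (wordMap (rho m) [2, 0]) P) :
    3 ^ (blockStart m + (m + 2)) ∣ P + 3 ^ blockStart m := by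
  set n := P + (wordMap (rho m) [2, 0]).length
  have hlen : P + (wordMap (rho m) [2, 0]).length ≤
      (chain directive 0 (blockStart m + (m + 2 + n)) 0).length := by
    rw [(isRecognizable_chain_directive 0 _).1 0]
    exact (Nat.lt_pow_self (by norm_num)).le.trans' (by omega)
  have hpre := (occursAt_chain_directive hx _).prefix_drop (by simpa using h) hlen
  rw [chain_directive_eq_wordMap_rho] at hpre
  obtain ⟨i, rfl, hi⟩ := (isRecognizable_rho m).2 _ _ P (by simp) hpre
  rw [pow_add, ← mul_add_one]
  exact mul_dvd_mul_left _ (dvd_of_ca_prefix_drop_block hi)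

theorem add_le_of_occursAt_wordMap_rho_ca (hx : ConvergesTo (fun n => rho n 0) 0 x)
    {m P Q : ℕ} (hP : OccursAt x (wordMap (rho m) [2, 0]) P)
    (hQ : OccursAt x (wordMap (rho m) [2, 0]) Q) (hPQ : P < Q) :
    P + 3 ^ (blockStart m + (m + 2)) ≤ Q := by
  have hdvd := Nat.dvd_sub (dvd_of_occursAt_wordMap_rho_ca hx hQ)
    (dvd_of_occursAt_wordMap_rho_ca hx hP)
  rw [Nat.add_sub_add_right] at hdvd
  have := Nat.le_of_dvd (by omega) hdvd
  omega

theorem not_linearlyRecurrent_of_convergesTo_rho (hx : ConvergesTo (fun n => rho n 0) 0 x) :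
    ¬ LinearlyRecurrent x := by
  rintro ⟨K, hK⟩
  have hlen : (wordMap (rho (2 * K)) [2, 0]).length = 3 ^ blockStart (2 * K) * 2 := by
    rw [(isRecognizable_rho _).1.length_wordMap]
    rfl
  refine not_linearlyRecurrentWith_of_separated ?_ (occurs_wordMap_rho_ca hx (2 * K))
    (fun P Q => add_le_of_occursAt_wordMap_rho_ca hx) ?_ hK
  · exact List.ne_nil_of_length_pos (by rw [hlen]; positivity)
  · have hK2 : 2 * K < 3 ^ (2 * K + 2) := (Nat.lt_pow_self (by norm_num)).trans' (by omega)
    have hpos : 0 < 3 ^ blockStart (2 * K) := by positivity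
    rw [hlen, pow_add]
    nlinarith

end Counterexample

/-- The sequence `x = lim στσ²τ⋯σⁿτ(aaa⋯)` is a primitive S-adic sequence over
`S = {σ, τ}` but is not linearly recurrent. -/
theorem counterexample_primitive_sadic_not_lr (x : ℕ → Fin 3)
    (hx : ConvergesTo (fun n => rho n 0) 0 x) :
    (∃ (σseq : ℕ → Fin 3 → List (Fin 3)) (Aseq : ℕ → Set (Fin 3)) (s0 : ℕ),
        (∀ n, σseq n = sigma3 ∨ σseq n = tau3) ∧
        GeneratesSAdic σseq Aseq 0 x ∧
        PrimitiveWith σseq Aseq s0) ∧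
      ¬ LinearlyRecurrent x :=
  ⟨⟨directive, fun _ => Set.univ, 2, directive_eq_sigma3_or_tau3,
      ⟨⟨fun _ => Set.mem_univ 0, fun _ _ _ c _ => Set.mem_univ c⟩, convergesTo_chain_directive hx⟩,
      primitiveWith_directive⟩,
    not_linearlyRecurrent_of_convergesTo_rho hx⟩

end DurandLR
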